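/- Suppose there is a hypergraph G in class C with maximum degree at most 2d = 2^(n-1)/n such that every full branch P of T_G contains l_P bottom units of power k_P where k_P + floor(log2(l_P)) ≥ n − log2(d) − 1. Then there exists an n-uniform hypergraph H in class C with maximum degree at most 2^(n-1)/n such that every full branch of T_H contains a hyperedge of H. -/

import Mathlib

/-!
Below every leaf `l` of `S` graft a complete binary tree of depth `t = ⌊log₂ l_P⌋`, and below
its `i`-th leaf a complete binary tree of depth `c - Lᵢ`, where `c = m + 1 + k_P` and `Lᵢ` is the
hyperedge size of the `i`-th bottom unit at `l`: this splits the units down to single hyperedges.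
A new leaf lies at depth at least `t + c - 1 ≥ n - 1`, since `Lᵢ ≤ |l| + 1`, so the last `n`
vertices of its branch form a hyperedge of the new hypergraph.

The `2^(c - Lᵢ)` new leaves coming from the `i`-th unit are charged to its `2^(c - Lᵢ)` hyperedges.
If the new hyperedge of such a leaf passes through a vertex `v` above `l`, then `t + c ≥ n` forces
the charged hyperedge (of size `Lᵢ`, ending at `l`) to pass through `v` as well, and a new vertex
below `l` only meets new hyperedges charged to hyperedges through `l`. So new degrees are bounded
by old ones, at most `2 · 2^m`, and `n · 2^(m+1) = 2^(n-1)`.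
-/

/-- The finset of all boolean lists of length `k` (nodes on level `k` of the
complete infinite rooted binary tree). -/
def listsOfLen : ℕ → Finset (List Bool)
  | 0 => {[]}
  | k+1 => (listsOfLen k).image (· ++ [true]) ∪ (listsOfLen k).image (· ++ [false])

/-- The vertex set of the full branch (root-to-`l` path) ending at the node `l`. -/
def prefixesF (l : List Bool) : Finset (List Bool) :=
  (Finset.range (l.length + 1)).image (fun i => l.take i)

/-- The vertex set of the level-descending path starting at node `p` and
ending at node `p ++ q`. -/
def pathFinset (p q : List Bool) : Finset (List Bool) :=
  (Finset.range (q.length + 1)).image (fun i => p ++ q.take i)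

/-- `S` is (the node set of) a rooted binary tree: it contains the root, is
prefix-closed, and every node has either zero or two children. -/
def IsBinTree (S : Finset (List Bool)) : Prop :=
  [] ∈ S ∧ (∀ l ∈ S, ∀ p : List Bool, p <+: l → p ∈ S) ∧
    ∀ l ∈ S, ((l ++ [true]) ∈ S ↔ (l ++ [false]) ∈ S)

/-- `l` is a leaf of the tree `S`. -/
def IsLeaf (S : Finset (List Bool)) (l : List Bool) : Prop :=
  l ∈ S ∧ (l ++ [true]) ∉ S ∧ (l ++ [false]) ∉ S

/-- The edge `e` is a level-descending path inside the tree `S`. -/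
def InTree (S : Finset (List Bool)) (e : Finset (List Bool)) : Prop :=
  ∃ p q : List Bool, (p ++ q) ∈ S ∧ e = pathFinset p q

/-- Degree of vertex `v` in a hypergraph with hyperedge multiset `E`
(counted with multiplicity). -/
def mDegree (E : Multiset (Finset (List Bool))) (v : List Bool) : ℕ :=
  Multiset.countP (fun e => v ∈ e) E

/-- The number (with multiplicity) of bottom hyperedges of size `L` of the full
branch ending at the leaf `l`: hyperedges contained in the branch and ending at `l`. -/
def bottomCount (E : Multiset (Finset (List Bool))) (l : List Bool) (L : ℕ) : ℕ :=
  Multiset.countP (fun e => l ∈ e ∧ e ⊆ prefixesF l ∧ e.card = L) E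

/-- With `d = 2^m`, the full branch ending at leaf `l` contains bottom units of
power `k` whose multiset of lengths is `ls`: a unit of power `k` and length `L`
consists of `2^(m+1+k-L)` hyperedges of size `L` ending at `l`. -/
def HasBottomUnits (m k : ℕ) (E : Multiset (Finset (List Bool))) (l : List Bool)
    (ls : Multiset ℕ) : Prop :=
  (∀ L ∈ ls, k ≤ L ∧ L ≤ m + 1 + k) ∧
  ∀ L : ℕ, ls.count L * 2 ^ (m + 1 + k - L) ≤ bottomCount E l L

open Finset

theorem Multiset.countP_mono_left {α : Type*} {s : Multiset α} {p q : α → Prop}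
    [DecidablePred p] [DecidablePred q] (h : ∀ a, p a → q a) : s.countP p ≤ s.countP q := by
  simp only [Multiset.countP_eq_card_filter]
  exact Multiset.card_le_card (Multiset.monotone_filter_right s h)

theorem Multiset.sum_countP_le_countP {α ι : Type*} (s : Finset ι) (E : Multiset α)
    (p : ι → α → Prop) [∀ i, DecidablePred (p i)] (q : α → Prop) [DecidablePred q]
    (himp : ∀ i ∈ s, ∀ e ∈ E, p i e → q e)
    (hdisj : ∀ i ∈ s, ∀ j ∈ s, ∀ e ∈ E, p i e → p j e → i = j) :
    ∑ i ∈ s, E.countP (p i) ≤ E.countP q := by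
  induction E using Multiset.induction_on with
  | empty => simp
  | cons a E ih =>
    have hE := ih (fun i hi e he => himp i hi e (Multiset.mem_cons_of_mem he))
      (fun i hi j hj e he => hdisj i hi j hj e (Multiset.mem_cons_of_mem he))
    have ha : #{i ∈ s | p i a} ≤ if q a then 1 else 0 := by
      split_ifs with hq
      · exact Finset.card_le_one.mpr fun i hi j hj => by
          simp only [Finset.mem_filter] at hi hj
          exact hdisj i hi.1 j hj.1 a (Multiset.mem_cons_self a E) hi.2 hj.2
      · exact (Finset.card_eq_zero.mpr (Finset.filter_eq_empty_iff.mpr fun i hi hp =>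
          hq (himp i hi a (Multiset.mem_cons_self a E) hp))).le
    simp only [Multiset.countP_cons, sum_add_distrib, sum_boole, Nat.cast_id]
    omega

theorem Finset.exists_map_le_of_card_le {α β : Type*} [Nonempty β] (s : Finset α)
    {M : Multiset β} (h : #s ≤ M.card) : ∃ φ : α → β, s.val.map φ ≤ M := by
  classical
  induction s using Finset.induction_on generalizing M with
  | empty => exact ⟨fun _ => Classical.arbitrary β, by simp⟩
  | insert a s ha ih =>
    rw [card_insert_of_notMem ha] at h
    obtain ⟨x, hx⟩ := Multiset.card_pos_iff_exists_mem.mp (by omega : 0 < M.card)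
    obtain ⟨φ, hφ⟩ := ih (M := M.erase x)
      (by rw [Multiset.card_erase_of_mem hx, Nat.pred_eq_sub_one]; omega)
    refine ⟨Function.update φ a x, ?_⟩
    have hs : s.val.map (Function.update φ a x) = s.val.map φ :=
      Multiset.map_congr rfl fun b hb => Function.update_of_ne (ne_of_mem_of_not_mem hb ha) _ _
    rw [insert_val_of_notMem ha, Multiset.map_cons, Function.update_self, hs]
    exact (Multiset.cons_le_cons x hφ).trans (Multiset.cons_erase hx).le

theorem mem_listsOfLen {w : List Bool} {d : ℕ} : w ∈ listsOfLen d ↔ w.length = d := by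
  induction d generalizing w with
  | zero => simp [listsOfLen]
  | succ d ih =>
    rcases List.eq_nil_or_concat' w with rfl | ⟨w, b, rfl⟩
    · simp [listsOfLen]
    · cases b <;> simp [listsOfLen, ih]

theorem card_listsOfLen (d : ℕ) : #(listsOfLen d) = 2 ^ d := by
  have : listsOfLen d = (univ : Finset (List.Vector Bool d)).map
      ⟨List.Vector.toList, List.Vector.toList_injective⟩ := by
    ext w
    simp only [mem_listsOfLen, mem_map, mem_univ, true_and, Function.Embedding.coeFn_mk]
    exact ⟨fun h => ⟨⟨w, h⟩, rfl⟩, by rintro ⟨v, rfl⟩; exact v.toList_length⟩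
  rw [this, card_map, card_univ, card_vector, Fintype.card_bool]

theorem mem_prefixesF {v l : List Bool} : v ∈ prefixesF l ↔ v <+: l := by
  simp only [prefixesF, mem_image, mem_range]
  refine ⟨fun ⟨i, _, hi⟩ => hi ▸ List.take_prefix i l, fun h => ?_⟩
  exact ⟨v.length, Nat.lt_succ_of_le h.length_le, (List.prefix_iff_eq_take.mp h).symm⟩

theorem mem_pathFinset {p q v : List Bool} : v ∈ pathFinset p q ↔ p <+: v ∧ v <+: p ++ q := by
  simp only [pathFinset, mem_image, mem_range]
  constructor
  · rintro ⟨i, _, rfl⟩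
    exact ⟨List.prefix_append _ _, (List.prefix_append_right_inj p).mpr (List.take_prefix i q)⟩
  · rintro ⟨⟨r, rfl⟩, h⟩
    have hr := (List.prefix_append_right_inj p).mp h
    exact ⟨r.length, Nat.lt_succ_of_le hr.length_le, by rw [← List.prefix_iff_eq_take.mp hr]⟩

theorem card_pathFinset (p q : List Bool) : #(pathFinset p q) = q.length + 1 := by
  rw [pathFinset, card_image_of_injOn, card_range]
  intro i hi j hj hij
  simp only [coe_range, Set.mem_Iio] at hi hj
  have := congrArg List.length hij
  simp only [List.length_append, List.length_take] at this
  omega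

theorem mem_of_prefix_of_lt_card {p q l v : List Bool} (hl : l ∈ pathFinset p q)
    (hsub : pathFinset p q ⊆ prefixesF l) (hv : v <+: l)
    (hlen : l.length < v.length + #(pathFinset p q)) : v ∈ pathFinset p q := by
  have hpq : p ++ q <+: l :=
    mem_prefixesF.mp (hsub (mem_pathFinset.mpr ⟨List.prefix_append p q, List.prefix_refl _⟩))
  obtain ⟨hp, hl⟩ := mem_pathFinset.mp hl
  obtain rfl := hl.eq_of_length (le_antisymm hl.length_le hpq.length_le)
  rw [card_pathFinset, List.length_append] at hlen
  exact mem_pathFinset.mpr ⟨List.prefix_of_prefix_length_le hp hv (by omega), hv⟩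

/-- The path formed by the last `n` vertices of the full branch ending at `u`. -/
def lastEdge (n : ℕ) (u : List Bool) : Finset (List Bool) :=
  pathFinset (u.take (u.length + 1 - n)) (u.drop (u.length + 1 - n))

section LastEdge

variable {n : ℕ} {u : List Bool}

theorem mem_lastEdge (hn : 0 < n) {v : List Bool} :
    v ∈ lastEdge n u ↔ v <+: u ∧ u.length < v.length + n := by
  rw [lastEdge, mem_pathFinset, List.take_append_drop]
  refine ⟨fun ⟨h₁, h₂⟩ => ⟨h₂, ?_⟩, fun ⟨h₁, h₂⟩ => ⟨?_, h₁⟩⟩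
  · have := h₁.length_le
    rw [List.length_take] at this
    omega
  · exact List.prefix_of_prefix_length_le (List.take_prefix _ u) h₁
      (by rw [List.length_take]; omega)

theorem card_lastEdge (hn : 0 < n) (h : n ≤ u.length + 1) : #(lastEdge n u) = n := by
  rw [lastEdge, card_pathFinset, List.length_drop]
  omega

theorem lastEdge_subset_prefixesF : lastEdge n u ⊆ prefixesF u := fun v hv => by
  rw [lastEdge, mem_pathFinset, List.take_append_drop] at hv
  exact mem_prefixesF.mpr hv.2

theorem inTree_lastEdge {S : Finset (List Bool)} (hu : u ∈ S) : InTree S (lastEdge n u) :=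
  ⟨_, _, by rwa [List.take_append_drop], rfl⟩

end LastEdge

theorem mDegree_map {α : Type*} (s : Finset α) (f : α → Finset (List Bool)) (v : List Bool) :
    mDegree (s.val.map f) v = #{u ∈ s | v ∈ f u} := by
  rw [mDegree, Multiset.countP_map]
  rfl

section BinTree

variable {S : Finset (List Bool)}

theorem IsBinTree.eq_of_isLeaf_of_prefix (hS : IsBinTree S) {l u : List Bool} (hl : IsLeaf S l)
    (hu : u ∈ S) (h : l <+: u) : u = l := by
  obtain ⟨r, rfl⟩ := h
  cases r with
  | nil => simp
  | cons b r =>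
    have hb : l ++ [b] ∈ S := hS.2.1 _ hu _ ⟨r, by simp⟩
    cases b
    · exact absurd hb hl.2.2
    · exact absurd hb hl.2.1

theorem IsBinTree.eq_of_isLeaf_of_prefix_of_prefix (hS : IsBinTree S) {l l' x : List Bool}
    (hl : IsLeaf S l) (hl' : IsLeaf S l') (h : l <+: x) (h' : l' <+: x) : l = l' := by
  rcases List.prefix_or_prefix_of_prefix h h' with h | h
  · exact (hS.eq_of_isLeaf_of_prefix hl hl'.1 h).symm
  · exact hS.eq_of_isLeaf_of_prefix hl' hl.1 h

theorem IsBinTree.append_mem_of_not_isLeaf (hS : IsBinTree S) {u : List Bool} (hu : u ∈ S)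
    (h : ¬IsLeaf S u) (b : Bool) : u ++ [b] ∈ S := by
  have := hS.2.2 u hu
  cases b <;> simp only [IsLeaf, not_and_or, not_not] at h <;> tauto

end BinTree

def leaves (S : Finset (List Bool)) : Finset (List Bool) :=
  S.filter fun l => l ++ [true] ∉ S ∧ l ++ [false] ∉ S

@[simp]
theorem mem_leaves {S : Finset (List Bool)} {l : List Bool} : l ∈ leaves S ↔ IsLeaf S l := by
  simp [leaves, IsLeaf]

def graft (S : Finset (List Bool)) (T : List Bool → Finset (List Bool)) : Finset (List Bool) :=
  S ∪ (leaves S).biUnion fun l => (T l).image (l ++ ·)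

section Graft

variable {S : Finset (List Bool)} {T : List Bool → Finset (List Bool)}

theorem mem_graft {u : List Bool} :
    u ∈ graft S T ↔ u ∈ S ∨ ∃ l, IsLeaf S l ∧ ∃ w ∈ T l, l ++ w = u := by
  simp [graft]

theorem mem_graft_cases (hT : ∀ l, IsLeaf S l → IsBinTree (T l)) {u : List Bool}
    (hu : u ∈ graft S T) :
    (u ∈ S ∧ ¬IsLeaf S u) ∨ ∃ l, IsLeaf S l ∧ ∃ w ∈ T l, u = l ++ w := by
  rcases mem_graft.mp hu with hu | ⟨l, hl, w, hw, rfl⟩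
  · by_cases hleaf : IsLeaf S u
    · exact Or.inr ⟨u, hleaf, [], (hT u hleaf).1, by simp⟩
    · exact Or.inl ⟨hu, hleaf⟩
  · exact Or.inr ⟨l, hl, w, hw, rfl⟩

theorem IsBinTree.append_mem_graft_iff (hS : IsBinTree S) {l : List Bool} (hl : IsLeaf S l)
    (w : List Bool) (b : Bool) : l ++ w ++ [b] ∈ graft S T ↔ w ++ [b] ∈ T l := by
  refine ⟨fun h => ?_, fun h => mem_graft.mpr (Or.inr ⟨l, hl, _, h, by simp⟩)⟩
  rcases mem_graft.mp h with hS' | ⟨l', hl', w', hw', heq⟩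
  · have := congrArg List.length (hS.eq_of_isLeaf_of_prefix hl hS' (by simp))
    simp at this
  · obtain rfl : l = l' := hS.eq_of_isLeaf_of_prefix_of_prefix hl hl'
      (by simp [List.append_assoc]) (heq ▸ List.prefix_append l' w')
    rw [List.append_assoc] at heq
    rwa [← List.append_cancel_left heq]

theorem IsBinTree.exists_of_isLeaf_graft (hS : IsBinTree S)
    (hT : ∀ l, IsLeaf S l → IsBinTree (T l)) {u : List Bool} (hu : IsLeaf (graft S T) u) :
    ∃ l, IsLeaf S l ∧ ∃ w, IsLeaf (T l) w ∧ u = l ++ w := by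
  rcases mem_graft_cases hT hu.1 with ⟨hu', hleaf⟩ | ⟨l, hl, w, hw, rfl⟩
  · exact absurd (mem_graft.mpr (Or.inl (hS.append_mem_of_not_isLeaf hu' hleaf true))) hu.2.1
  · refine ⟨l, hl, w, ⟨hw, ?_, ?_⟩, rfl⟩
    · rw [← hS.append_mem_graft_iff hl]; exact hu.2.1
    · rw [← hS.append_mem_graft_iff hl]; exact hu.2.2

theorem IsBinTree.card_filter_leaves_graft_le (hS : IsBinTree S)
    (hT : ∀ l, IsLeaf S l → IsBinTree (T l)) (P : List Bool → Prop) [DecidablePred P] :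
    #{u ∈ leaves (graft S T) | P u} ≤ ∑ l ∈ leaves S, #{w ∈ leaves (T l) | P (l ++ w)} := by
  calc #{u ∈ leaves (graft S T) | P u}
      ≤ #((leaves S).biUnion fun l => {w ∈ leaves (T l) | P (l ++ w)}.image (l ++ ·)) := by
        refine card_le_card fun u hu => ?_
        obtain ⟨hu, hP⟩ := mem_filter.mp hu
        obtain ⟨l, hl, w, hw, rfl⟩ := hS.exists_of_isLeaf_graft hT (mem_leaves.mp hu)
        simp only [mem_biUnion, mem_image, mem_filter, mem_leaves]
        exact ⟨l, hl, w, ⟨hw, hP⟩, rfl⟩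
    _ ≤ ∑ l ∈ leaves S, #({w ∈ leaves (T l) | P (l ++ w)}.image (l ++ ·)) := card_biUnion_le
    _ ≤ _ := sum_le_sum fun l _ => card_image_le

theorem IsBinTree.graft (hS : IsBinTree S) (hT : ∀ l, IsLeaf S l → IsBinTree (T l)) :
    IsBinTree (graft S T) := by
  refine ⟨mem_graft.mpr (Or.inl hS.1), fun u hu p hp => ?_, fun u hu => ?_⟩
  · rcases mem_graft.mp hu with hu | ⟨l, hl, w, hw, rfl⟩
    · exact mem_graft.mpr (Or.inl (hS.2.1 u hu p hp))
    · rcases List.prefix_or_prefix_of_prefix hp (List.prefix_append l w) with hpl | hlp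
      · exact mem_graft.mpr (Or.inl (hS.2.1 l hl.1 p hpl))
      · obtain ⟨w₀, rfl⟩ := hlp
        exact mem_graft.mpr (Or.inr ⟨l, hl, w₀, (hT l hl).2.1 w hw w₀
          ((List.prefix_append_right_inj l).mp hp), rfl⟩)
  · rcases mem_graft_cases hT hu with ⟨hu, hleaf⟩ | ⟨l, hl, w, hw, rfl⟩
    · exact iff_of_true (mem_graft.mpr (Or.inl (hS.append_mem_of_not_isLeaf hu hleaf _)))
        (mem_graft.mpr (Or.inl (hS.append_mem_of_not_isLeaf hu hleaf _)))
    · rw [hS.append_mem_graft_iff hl, hS.append_mem_graft_iff hl]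
      exact (hT l hl).2.2 w hw

end Graft

def fullTree (d : ℕ) : Finset (List Bool) :=
  (range (d + 1)).biUnion listsOfLen

theorem mem_fullTree {d : ℕ} {u : List Bool} : u ∈ fullTree d ↔ u.length ≤ d := by
  simp [fullTree, mem_listsOfLen]

theorem isBinTree_fullTree (d : ℕ) : IsBinTree (fullTree d) :=
  ⟨by simp [mem_fullTree],
    fun _ hl _ hp => mem_fullTree.mpr (hp.length_le.trans (mem_fullTree.mp hl)),
    fun _ _ => by simp [mem_fullTree]⟩

theorem leaves_fullTree (d : ℕ) : leaves (fullTree d) = listsOfLen d := by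
  ext u
  simp only [mem_leaves, IsLeaf, mem_fullTree, mem_listsOfLen, List.length_append,
    List.length_singleton]
  omega

theorem card_filter_leaves_graft_fullTree_le (t : ℕ) (g : List Bool → ℕ) (P : ℕ → Prop)
    [DecidablePred P] :
    #{w ∈ leaves (graft (fullTree t) fun b => fullTree (g b)) | P w.length} ≤
      ∑ b ∈ listsOfLen t, if P (t + g b) then 2 ^ g b else 0 := by
  refine ((isBinTree_fullTree t).card_filter_leaves_graft_le
    (fun b _ => isBinTree_fullTree (g b)) (fun w => P w.length)).trans ?_
  rw [leaves_fullTree]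
  refine sum_le_sum fun b hb => ?_
  rw [leaves_fullTree]
  have hlen : ∀ s ∈ listsOfLen (g b), (b ++ s).length = t + g b := fun s hs => by
    rw [List.length_append, mem_listsOfLen.mp hb, mem_listsOfLen.mp hs]
  split_ifs with hP
  · exact (card_filter_le _ _).trans (card_listsOfLen _).le
  · exact (card_eq_zero.mpr (filter_eq_empty_iff.mpr fun s hs => hlen s hs ▸ hP)).le

theorem length_of_isLeaf_graft_fullTree {t : ℕ} {g : List Bool → ℕ} {w : List Bool}
    (hw : IsLeaf (graft (fullTree t) fun b => fullTree (g b)) w) :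
    ∃ b ∈ listsOfLen t, w.length = t + g b := by
  obtain ⟨b, hb, s, hs, rfl⟩ := (isBinTree_fullTree t).exists_of_isLeaf_graft
    (fun b _ => isBinTree_fullTree (g b)) hw
  rw [← mem_leaves, leaves_fullTree, mem_listsOfLen] at hb hs
  exact ⟨b, mem_listsOfLen.mpr hb, by rw [List.length_append, hb, hs]⟩

/-- A tree to be grafted below the leaf `l` of the hypergraph `E`. For `M = |v| + n`, the last
clause bounds the new `n`-edges through a vertex `v` above `l` by the bottom hyperedges of `E`
at `l` through `v`. -/
def IsChargedTree (n : ℕ) (E : Multiset (Finset (List Bool))) (l : List Bool)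
    (T : Finset (List Bool)) : Prop :=
  IsBinTree T ∧ (∀ w, IsLeaf T w → n ≤ l.length + w.length + 1) ∧
    ∀ M, #{w ∈ leaves T | l.length + w.length < M} ≤
      E.countP fun e => l ∈ e ∧ e ⊆ prefixesF l ∧ l.length + n < M + #e

theorem HasBottomUnits.le_length_add_one {m k : ℕ} {E : Multiset (Finset (List Bool))}
    {l : List Bool} {ls : Multiset ℕ} (h : HasBottomUnits m k E l ls) {L : ℕ} (hL : L ∈ ls) :
    L ≤ l.length + 1 := by
  have hpos : 0 < bottomCount E l L :=
    (Nat.mul_pos (Multiset.count_pos.mpr hL) (Nat.two_pow_pos _)).trans_le (h.2 L)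
  obtain ⟨e, -, -, hsub, rfl⟩ := Multiset.countP_pos.mp hpos
  calc #e ≤ #(prefixesF l) := card_le_card hsub
    _ ≤ #(range (l.length + 1)) := card_image_le
    _ = l.length + 1 := card_range _

theorem HasBottomUnits.exists_isChargedTree {m k n : ℕ} {E : Multiset (Finset (List Bool))}
    {l : List Bool} {ls : Multiset ℕ} (hunits : HasBottomUnits m k E l ls) (hls : ls ≠ 0)
    (hn : n ≤ m + 1 + k + Nat.log 2 ls.card) : ∃ T, IsChargedTree n E l T := by
  set t := Nat.log 2 ls.card
  set c := m + 1 + k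
  obtain ⟨φ, hφ⟩ := (listsOfLen t).exists_map_le_of_card_le (M := ls)
    (by rw [card_listsOfLen]; exact Nat.pow_log_le_self 2 (Multiset.card_eq_zero.not.mpr hls))
  have hφmem : ∀ b ∈ listsOfLen t, φ b ∈ ls :=
    fun b hb => Multiset.mem_of_le hφ (Multiset.mem_map_of_mem φ hb)
  refine ⟨graft (fullTree t) fun b => fullTree (c - φ b),
    (isBinTree_fullTree t).graft fun b _ => isBinTree_fullTree _, fun w hw => ?_, fun M => ?_⟩
  · obtain ⟨b, hb, hw⟩ := length_of_isLeaf_graft_fullTree hw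
    have := hunits.1 _ (hφmem b hb)
    have := hunits.le_length_add_one (hφmem b hb)
    omega
  set f : ℕ → ℕ := fun L => if l.length + (t + (c - L)) < M then 2 ^ (c - L) else 0
  calc #{w ∈ leaves _ | l.length + w.length < M}
      ≤ ∑ b ∈ listsOfLen t, f (φ b) :=
        card_filter_leaves_graft_fullTree_le t _ (l.length + · < M)
    _ ≤ (ls.map f).sum := by
        obtain ⟨N, hN⟩ := Multiset.le_iff_exists_add.mp hφ
        rw [sum_eq_multiset_sum, ← Function.comp_def f φ, ← Multiset.map_map, hN,
          Multiset.map_add, Multiset.sum_add]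
        exact Nat.le_add_right _ _
    _ = ∑ L ∈ ls.toFinset, ls.count L * f L := sum_multiset_map_count ls f
    _ ≤ ∑ L ∈ ls.toFinset, if l.length + n < M + L then bottomCount E l L else 0 := by
        refine sum_le_sum fun L hL => ?_
        have hLc := (hunits.1 L (Multiset.mem_toFinset.mp hL)).2
        simp only [f]
        split_ifs with h₁ h₂
        · exact hunits.2 L
        · omega
        · simp
        · simp
    _ = ∑ L ∈ ls.toFinset with l.length + n < M + L, bottomCount E l L := (sum_filter _ _).symm
    _ ≤ _ := Multiset.sum_countP_le_countP _ E _ _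
        (fun L hL e _ he => ⟨he.1, he.2.1, he.2.2 ▸ (mem_filter.mp hL).2⟩)
        (fun L _ L' _ e _ he he' => he.2.2.symm.trans he'.2.2)

section Degree

variable {S : Finset (List Bool)} {E : Multiset (Finset (List Bool))}
  {T : List Bool → Finset (List Bool)} {n D : ℕ}

theorem IsChargedTree.card_filter_mem_lastEdge_le {l : List Bool} {T : Finset (List Bool)}
    (hT : IsChargedTree n E l T) (hn : 0 < n) (v : List Bool) :
    #{w ∈ leaves T | v ∈ lastEdge n (l ++ w)} ≤
      E.countP fun e => l ∈ e ∧ e ⊆ prefixesF l ∧ l.length < v.length + #e := by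
  calc #{w ∈ leaves T | v ∈ lastEdge n (l ++ w)}
      ≤ #{w ∈ leaves T | l.length + w.length < v.length + n} :=
        card_le_card (monotone_filter_right _ fun w _ hw => by
          simpa using ((mem_lastEdge hn).mp hw).2)
    _ ≤ _ := hT.2.2 _
    _ ≤ _ := Multiset.countP_mono_left fun e he => ⟨he.1, he.2.1, by omega⟩

theorem sum_card_mem_lastEdge_le_of_isLeaf_prefix (hS : IsBinTree S)
    (hdeg : ∀ v, mDegree E v ≤ D) (hT : ∀ l, IsLeaf S l → IsChargedTree n E l (T l))
    (hn : 0 < n) {v l₀ : List Bool} (hl₀ : IsLeaf S l₀) (hl₀v : l₀ <+: v) :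
    ∑ l ∈ leaves S, #{w ∈ leaves (T l) | v ∈ lastEdge n (l ++ w)} ≤ D := by
  rw [sum_eq_single_of_mem l₀ (mem_leaves.mpr hl₀) fun l hl hne => ?_]
  · calc _ ≤ _ := (hT l₀ hl₀).card_filter_mem_lastEdge_le hn v
      _ ≤ E.countP (l₀ ∈ ·) := Multiset.countP_mono_left fun e he => he.1
      _ ≤ D := hdeg l₀
  · refine card_eq_zero.mpr (filter_eq_empty_iff.mpr fun w _ hw => hne ?_)
    exact hS.eq_of_isLeaf_of_prefix_of_prefix (mem_leaves.mp hl) hl₀ (List.prefix_append l w)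
      (hl₀v.trans ((mem_lastEdge hn).mp hw).1)

theorem sum_card_mem_lastEdge_le_of_forall_not_prefix (hS : IsBinTree S)
    (hE : ∀ e ∈ E, InTree S e) (hdeg : ∀ v, mDegree E v ≤ D)
    (hT : ∀ l, IsLeaf S l → IsChargedTree n E l (T l)) (hn : 0 < n) {v : List Bool}
    (hv : ∀ l, IsLeaf S l → ¬l <+: v) :
    ∑ l ∈ leaves S, #{w ∈ leaves (T l) | v ∈ lastEdge n (l ++ w)} ≤ D := by
  calc _ ≤ ∑ l ∈ leaves S, E.countP fun e =>
          v <+: l ∧ l ∈ e ∧ e ⊆ prefixesF l ∧ l.length < v.length + #e := by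
        refine sum_le_sum fun l hl => ?_
        by_cases hvl : v <+: l
        · exact ((hT l (mem_leaves.mp hl)).card_filter_mem_lastEdge_le hn v).trans
            (Multiset.countP_mono_left fun e he => ⟨hvl, he⟩)
        · suffices #{w ∈ leaves (T l) | v ∈ lastEdge n (l ++ w)} = 0 by
            rw [this]; exact Nat.zero_le _
          refine card_eq_zero.mpr (filter_eq_empty_iff.mpr fun w _ hw => hvl ?_)
          rcases List.prefix_or_prefix_of_prefix ((mem_lastEdge hn).mp hw).1
            (List.prefix_append l w) with h | h
          · exact h
          · exact absurd h (hv l (mem_leaves.mp hl))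
    _ ≤ E.countP (v ∈ ·) := Multiset.sum_countP_le_countP _ E _ _
        (fun l _ e he ⟨hvl, hle, hsub, hlen⟩ => by
          obtain ⟨p, q, -, rfl⟩ := hE e he
          exact mem_of_prefix_of_lt_card hle hsub hvl hlen)
        (fun l hl l' hl' e _ h h' => (hS.eq_of_isLeaf_of_prefix (mem_leaves.mp hl)
          (mem_leaves.mp hl').1 (mem_prefixesF.mp (h'.2.2.1 h.2.1))).symm)
    _ ≤ D := hdeg v

theorem mDegree_lastEdge_graft_le (hS : IsBinTree S) (hE : ∀ e ∈ E, InTree S e)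
    (hdeg : ∀ v, mDegree E v ≤ D) (hT : ∀ l, IsLeaf S l → IsChargedTree n E l (T l))
    (hn : 0 < n) (v : List Bool) :
    mDegree ((leaves (graft S T)).val.map (lastEdge n)) v ≤ D := by
  rw [mDegree_map]
  refine (hS.card_filter_leaves_graft_le (fun l hl => (hT l hl).1) _).trans ?_
  by_cases hbelow : ∃ l₀, IsLeaf S l₀ ∧ l₀ <+: v
  · obtain ⟨l₀, hl₀, hl₀v⟩ := hbelow
    exact sum_card_mem_lastEdge_le_of_isLeaf_prefix hS hdeg hT hn hl₀ hl₀v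
  · exact sum_card_mem_lastEdge_le_of_forall_not_prefix hS hE hdeg hT hn
      fun l hl hlv => hbelow ⟨l, hl, hlv⟩

end Degree

/-- If there is a tree hypergraph with maximum degree at most `2d`
(`d = 2^m = 2^(n-2)/n`, `n = 2^κ`) in which every full branch `P` contains
`l_P ≥ 1` bottom units of power `k_P` with `k_P + ⌊log₂ l_P⌋ ≥ n - log₂ d - 1`,
then there is an `n`-uniform tree hypergraph with maximum degree at most
`2^(n-1)/n` in which every full branch contains a hyperedge. -/
theorem sufficient_condition_for_maker_hypergraph (κ n m : ℕ)
    (hn : n = 2 ^ κ) (hm : m + κ + 2 = n)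
    (h : ∃ (S : Finset (List Bool)) (E : Multiset (Finset (List Bool))),
      IsBinTree S ∧ (∀ e ∈ E, InTree S e) ∧
      (∀ v : List Bool, mDegree E v ≤ 2 * 2 ^ m) ∧
      (∀ l : List Bool, IsLeaf S l → ∃ (lP kP : ℕ) (ls : Multiset ℕ),
        1 ≤ lP ∧ ls.card = lP ∧ HasBottomUnits m kP E l ls ∧
        n - m - 1 ≤ kP + Nat.log 2 lP)) :
    ∃ (S' : Finset (List Bool)) (E' : Multiset (Finset (List Bool))),
      IsBinTree S' ∧ (∀ e ∈ E', InTree S' e) ∧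
      (∀ e ∈ E', e.card = n) ∧
      (∀ v : List Bool, n * mDegree E' v ≤ 2 ^ (n - 1)) ∧
      (∀ l : List Bool, IsLeaf S' l → ∃ e ∈ E', e ⊆ prefixesF l) := by
  obtain ⟨S, E, hS, hE, hdeg, hunits⟩ := h
  have hn0 : 0 < n := hn ▸ Nat.two_pow_pos κ
  have htree : ∀ l, IsLeaf S l → ∃ T, IsChargedTree n E l T := fun l hl => by
    obtain ⟨lP, k, ls, hlP, rfl, hls, hlog⟩ := hunits l hl
    exact hls.exists_isChargedTree (Multiset.card_pos.mp hlP) (by omega)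
  choose! T hT using htree
  have hdeg' : ∀ v, mDegree E v ≤ 2 ^ (m + 1) := fun v => (hdeg v).trans_eq (pow_succ' 2 m).symm
  refine ⟨graft S T, (leaves (graft S T)).val.map (lastEdge n), hS.graft fun l hl => (hT l hl).1,
    ?_, ?_, fun v => ?_, fun u hu => ⟨lastEdge n u, Multiset.mem_map_of_mem _ (mem_leaves.mpr hu),
      lastEdge_subset_prefixesF⟩⟩
  · simp only [Multiset.mem_map, mem_val, mem_leaves]
    rintro _ ⟨u, hu, rfl⟩
    exact inTree_lastEdge hu.1
  · simp only [Multiset.mem_map, mem_val, mem_leaves]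
    rintro _ ⟨u, hu, rfl⟩
    obtain ⟨l, hl, w, hw, rfl⟩ := hS.exists_of_isLeaf_graft (fun l hl => (hT l hl).1) hu
    exact card_lastEdge hn0 (by rw [List.length_append]; exact (hT l hl).2.1 w hw)
  · calc n * mDegree _ v ≤ n * 2 ^ (m + 1) :=
          Nat.mul_le_mul_left n (mDegree_lastEdge_graft_le hS hE hdeg' hT hn0 v)
      _ = 2 ^ (n - 1) := by rw [hn, ← pow_add]; congr 1; omega
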